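/- Fix μ_1,...,μ_k > 0 and let f(t_1,...,t_k) = ∏_{i=1}^k t_i/(t_i+μ_i). If U ⊆ R_+^k is an open convex set on which f is concave, then U ⊆ D_k(μ_1,...,μ_k). -/

import Mathlib

/-!
Restricting `f` to a line `s ↦ t + s • w` through `t ∈ U` gives a concave function, so
`f(t)⁻¹ D²f(t)[w, w] = D²(log f)(t)[w, w] + (D(log f)(t)[w])² ≤ 0`, and
`log f = ∑ᵢ (log tᵢ - log (tᵢ + μᵢ))` makes both terms explicit. Substituting
`wᵢ = vᵢ tᵢ (tᵢ + μᵢ) / μᵢ` (the Hadamard product with the entrywise inverse of the rank-one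
matrix `P(t)`) turns this inequality into `-vᵀ A_k(t) v ≤ 0`.
-/

open Matrix Filter Topology Set

/-- The matrix `A_k(t)` with diagonal entries `2tᵢ/μᵢ` and off-diagonal entries `-1`. -/
noncomputable def Amat {k : ℕ} (μ t : Fin k → ℝ) : Matrix (Fin k) (Fin k) ℝ :=
  Matrix.of fun i j => if i = j then 2 * t i / μ i else -1

/-- The domain `D_k(μ₁,…,μ_k)`. -/
def Dk {k : ℕ} (μ : Fin k → ℝ) : Set (Fin k → ℝ) :=
  {t | (∀ i, 0 < t i) ∧ (Amat μ t).PosSemidef}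

theorem ConcaveOn.hasDerivAt_deriv_nonpos {f : ℝ → ℝ} {s : Set ℝ} {x f'' : ℝ}
    (hf : ConcaveOn ℝ s f) (hs : s ∈ 𝓝 x) (hd : ∀ y ∈ s, DifferentiableAt ℝ f y)
    (h2 : HasDerivAt (deriv f) f'' x) : f'' ≤ 0 := by
  have hacc : AccPt x (𝓟 s) := by
    simpa using (PerfectSpace.univ_preperfect x (mem_univ x)).nhds_inter hs
  exact h2.hasDerivWithinAt.nonpos_of_antitoneOn hacc (hf.antitoneOn_deriv hd)

theorem hasDerivAt_deriv_exp_comp {S S' : ℝ → ℝ} {S'' x : ℝ}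
    (hS : ∀ᶠ y in 𝓝 x, HasDerivAt S (S' y) y) (hS' : HasDerivAt S' S'' x) :
    HasDerivAt (deriv fun y => Real.exp (S y)) (Real.exp (S x) * (S'' + S' x ^ 2)) x := by
  have hderiv : deriv (fun y => Real.exp (S y)) =ᶠ[𝓝 x] fun y => Real.exp (S y) * S' y := by
    filter_upwards [hS] with y hy using hy.exp.deriv
  refine ((hS.self_of_nhds.exp.mul hS').congr_of_eventuallyEq hderiv).congr_deriv ?_
  ring

theorem hasDerivAt_log_add_mul {a w s : ℝ} (h : a + s * w ≠ 0) :
    HasDerivAt (fun s => Real.log (a + s * w)) (w / (a + s * w)) s := by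
  simpa using (((hasDerivAt_id s).mul_const w).const_add a).log h

theorem hasDerivAt_div_add_mul {a w s : ℝ} (h : a + s * w ≠ 0) :
    HasDerivAt (fun s => w / (a + s * w)) (-(w ^ 2 / (a + s * w) ^ 2)) s := by
  have hden : HasDerivAt (fun s => a + s * w) w s := by
    simpa using ((hasDerivAt_id s).mul_const w).const_add a
  refine ((hasDerivAt_const s w).div hden h).congr_deriv ?_
  ring

theorem isHermitian_Amat {k : ℕ} (μ t : Fin k → ℝ) : (Amat μ t).IsHermitian := by
  ext i j
  by_cases h : i = j
  · subst h; simp [Amat]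
  · simp [Amat, h, Ne.symm h]

theorem dotProduct_Amat_mulVec {k : ℕ} (μ t v : Fin k → ℝ) :
    v ⬝ᵥ Amat μ t *ᵥ v = ∑ i, (2 * t i / μ i + 1) * v i ^ 2 - (∑ i, v i) ^ 2 := by
  have hA : Amat μ t = diagonal (fun i => 2 * t i / μ i + 1) - of fun _ _ => 1 := by
    ext i j
    by_cases h : i = j
    · subst h; simp [Amat]
    · simp [Amat, h]
  rw [hA, sub_mulVec, dotProduct_sub]
  congr 1
  · simp only [dotProduct, mulVec_diagonal]
    exact Finset.sum_congr rfl fun i _ => by ring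
  · simp [dotProduct, mulVec, sq, Finset.mul_sum, mul_comm]

/-- The left side is `f(t)⁻¹ • D²f(t)[w, w]`: the second derivative of `log f` along `w` plus the
square of its first derivative. -/
theorem second_variation_nonpos_of_concaveOn {k : ℕ} {μ : Fin k → ℝ} (hμ : ∀ i, 0 < μ i)
    {U : Set (Fin k → ℝ)} (hUopen : IsOpen U) (hUpos : ∀ t ∈ U, ∀ i, 0 < t i)
    (hconc : ConcaveOn ℝ U (fun t => ∏ i, t i / (t i + μ i))) {t : Fin k → ℝ} (ht : t ∈ U)
    (w : Fin k → ℝ) :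
    ∑ i, (w i ^ 2 / (t i + μ i) ^ 2 - w i ^ 2 / t i ^ 2)
      + (∑ i, (w i / t i - w i / (t i + μ i))) ^ 2 ≤ 0 := by
  set L : ℝ →ᵃ[ℝ] (Fin k → ℝ) := AffineMap.lineMap t (t + w)
  have hL : ∀ s i, L s i = t i + s * w i := fun s i => by
    simp only [AffineMap.lineMap_apply_module', add_sub_cancel_left, Pi.add_apply,
      Pi.smul_apply, smul_eq_mul, L]
    ring
  set V := L ⁻¹' U
  have h0 : (0 : ℝ) ∈ V := by simpa [V, L] using ht
  have hV : V ∈ 𝓝 0 := (hUopen.preimage AffineMap.lineMap_continuous).mem_nhds h0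
  have hpos : ∀ s ∈ V, ∀ i, 0 < t i + s * w i := fun s hs i => hL s i ▸ hUpos _ hs i
  have hposμ : ∀ s ∈ V, ∀ i, 0 < t i + μ i + s * w i := fun s hs i => by
    linarith [hpos s hs i, hμ i]
  set S : ℝ → ℝ := fun s => ∑ i, (Real.log (t i + s * w i) - Real.log (t i + μ i + s * w i))
  set S' : ℝ → ℝ := fun s => ∑ i, (w i / (t i + s * w i) - w i / (t i + μ i + s * w i))
  have hS : ∀ s ∈ V, HasDerivAt S (S' s) s := fun s hs =>
    HasDerivAt.fun_sum fun i _ =>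
      (hasDerivAt_log_add_mul (hpos s hs i).ne').sub
        (hasDerivAt_log_add_mul (hposμ s hs i).ne')
  have hS' : HasDerivAt S' (∑ i, (w i ^ 2 / (t i + μ i) ^ 2 - w i ^ 2 / t i ^ 2)) 0 := by
    refine (HasDerivAt.fun_sum fun i _ => (hasDerivAt_div_add_mul (hpos 0 h0 i).ne').sub
      (hasDerivAt_div_add_mul (hposμ 0 h0 i).ne')).congr_deriv ?_
    simp only [zero_mul, add_zero]
    exact Finset.sum_congr rfl fun i _ => by ring
  have hfS : EqOn ((fun t => ∏ i, t i / (t i + μ i)) ∘ L) (fun s => Real.exp (S s)) V := by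
    intro s hs
    show ∏ i, L s i / (L s i + μ i) = Real.exp (S s)
    simp only [hL, S, Real.exp_sum, Real.exp_sub]
    refine Finset.prod_congr rfl fun i _ => ?_
    rw [Real.exp_log (hpos s hs i), Real.exp_log (hposμ s hs i), add_right_comm]
  have key := ((hconc.comp_affineMap L).congr hfS).hasDerivAt_deriv_nonpos hV
    (fun s hs => (hS s hs).exp.differentiableAt)
    (hasDerivAt_deriv_exp_comp (eventually_of_mem hV hS) hS')
  have hS'0 : S' 0 = ∑ i, (w i / t i - w i / (t i + μ i)) := by simp [S']
  rw [hS'0] at key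
  exact nonpos_of_mul_nonpos_right key (Real.exp_pos _)

theorem open_convex_concave_subset_Dk_general {k : ℕ} (μ : Fin k → ℝ) (hμ : ∀ i, 0 < μ i)
    (U : Set (Fin k → ℝ)) (hUopen : IsOpen U)
    (hUpos : ∀ t ∈ U, ∀ i, 0 < t i)
    (hconc : ConcaveOn ℝ U (fun t => ∏ i, t i / (t i + μ i))) :
    U ⊆ Dk μ := by
  intro t ht
  refine ⟨hUpos t ht, .of_dotProduct_mulVec_nonneg (isHermitian_Amat μ t) fun v => ?_⟩
  set w : Fin k → ℝ := fun i => v i * (t i * (t i + μ i)) / μ i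
  have hw : ∀ i, w i / t i - w i / (t i + μ i) = v i ∧
      w i ^ 2 / (t i + μ i) ^ 2 - w i ^ 2 / t i ^ 2 = -((2 * t i / μ i + 1) * v i ^ 2) := by
    intro i
    have hti := hUpos t ht i
    have hμi := hμ i
    constructor <;> (simp only [w]; field_simp; ring)
  have key := second_variation_nonpos_of_concaveOn hμ hUopen hUpos hconc ht w
  simp only [fun i => (hw i).1, fun i => (hw i).2, Finset.sum_neg_distrib] at key
  rw [star_trivial, dotProduct_Amat_mulVec]
  linarith

/-- Any open convex subset of the positive orthant on which
`f(t₁,…,t_k) = ∏ tᵢ/(tᵢ+μᵢ)` is concave is contained in `D_k(μ₁,…,μ_k)`. -/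
theorem open_convex_concave_subset_Dk {k : ℕ} (μ : Fin k → ℝ) (hμ : ∀ i, 0 < μ i)
    (U : Set (Fin k → ℝ)) (hUopen : IsOpen U) (hUconv : Convex ℝ U)
    (hUpos : ∀ t ∈ U, ∀ i, 0 < t i)
    (hconc : ConcaveOn ℝ U (fun t => ∏ i, t i / (t i + μ i))) :
    U ⊆ Dk μ :=
  open_convex_concave_subset_Dk_general μ hμ U hUopen hUpos hconc
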